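/- Let α ∈ (0,1), let c₊ ≥ 0 and c₋ ≥ 0, and let F : [0,∞) → ℝ be twice continuously differentiable with F' and F'' bounded, |F'(y)| = O(y^γ) as y → ∞ for some γ < α−1, and |F(y)| = O(y^δ) as y → ∞ for some δ < α−1. Then for every y > 0 the following three expressions are well defined and equal: (Itô form) ∫₀^y (F(y−x) − F(y)) c₊ x^{−1−α} dx + c₊(F(0) − F(y))/(α y^α) + ∫₀^∞ (F(y+x) − F(y)) c₋ x^{−1−α} dx; (Riemann–Liouville form) −(c₊/α) (d/dy) ∫₀^y F(x)(y−x)^{−α} dx + c₊ F(0)/(α y^α) + (c₋/α) (d/dy) ∫_y^∞ F(x)(x−y)^{−α} dx; (Caputo form) −(c₊/α) ∫₀^y F'(x)(y−x)^{−α} dx + (c₋/α) ∫_y^∞ F'(x)(x−y)^{−α} dx. -/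

import Mathlib

open Set Filter MeasureTheory Asymptotics Topology

/-!
Since `x ^ (-1 - α) = -(1/α) d/dx x ^ (-α)`, an integration by parts turns each Itô integral into
the corresponding Caputo integral; the boundary terms vanish at `0` because
`|F (y ∓ x) - F y| ≤ ‖F'‖∞ x` and `α < 1`, and at `∞` because `F` is bounded and `α > 0`.

The right Riemann–Liouville derivative is obtained by writing `gm w = ∫₀^∞ F (u + w) u ^ (-α) du`
and differentiating under the integral sign, the decay of `F'` providing an integrable majorant.
For the left one the singularity of the kernel moves with `w`, so we first integrate by parts
twice,
`gp w = F 0 w^(1-α)/(1-α) + F' 0 w^(2-α)/((1-α)(2-α)) + ∫₀^w F''(x) (w-x)^(2-α) dx/((1-α)(2-α))`,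
whose last kernel is `C¹` in `w`; differentiating and integrating by parts once more back gives
`F 0 y^(-α) + ∫₀^y F'(x) (y-x)^(-α) dx`. Both Riemann–Liouville forms therefore reduce to the Caputo
form by algebra.
-/

namespace StableGenerator

lemma exists_abs_le_rpow_of_isBigO {g : ℝ → ℝ} {γ : ℝ} (hO : g =O[atTop] fun x => x ^ γ) :
    ∃ C R, 0 ≤ C ∧ 0 < R ∧ ∀ x, R ≤ x → |g x| ≤ C * x ^ γ := by
  obtain ⟨c, hc⟩ := hO.bound
  obtain ⟨r, hr⟩ := eventually_atTop.mp hc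
  refine ⟨max c 0, max r 1, le_max_right _ _, by positivity, fun x hRx => ?_⟩
  have hx : 0 < x := lt_of_lt_of_le (by positivity) hRx
  have hgx := hr x (le_of_max_le_left hRx)
  rw [Real.norm_eq_abs, Real.norm_eq_abs, abs_of_pos (Real.rpow_pos_of_pos hx γ)] at hgx
  exact hgx.trans (mul_le_mul_of_nonneg_right (le_max_left _ _) (Real.rpow_nonneg hx.le γ))

lemma exists_abs_le_of_continuousOn_of_isBigO {g : ℝ → ℝ} {γ : ℝ} (hg : ContinuousOn g (Ici 0))
    (hO : g =O[atTop] fun x => x ^ γ) (hγ : γ ≤ 0) : ∃ M, ∀ x ∈ Ici (0:ℝ), |g x| ≤ M := by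
  obtain ⟨C, R, hC, hR, hdecay⟩ := exists_abs_le_rpow_of_isBigO hO
  obtain ⟨B, hB⟩ := isCompact_Icc.exists_bound_of_continuousOn (hg.mono Icc_subset_Ici_self)
  refine ⟨max B (C * R ^ γ), fun x hx => ?_⟩
  rcases le_total x R with hxR | hRx
  · exact (hB x ⟨hx, hxR⟩).trans (le_max_left _ _)
  · refine ((hdecay x hRx).trans ?_).trans (le_max_right _ _)
    exact mul_le_mul_of_nonneg_left (Real.rpow_le_rpow_of_nonpos hR hRx hγ) hC

lemma exists_integrable_majorant_comp_add_mul_rpow {g : ℝ → ℝ} {α γ : ℝ} (hα : α < 1)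
    (hγ : γ < α - 1) (hg : ContinuousOn g (Ici 0)) (hO : g =O[atTop] fun x => x ^ γ) :
    ∃ b : ℝ → ℝ, IntegrableOn b (Ioi 0) ∧ ∀ u > 0, ∀ w ≥ 0, |g (u + w)| * u ^ (-α) ≤ b u := by
  obtain ⟨M, hM⟩ := exists_abs_le_of_continuousOn_of_isBigO hg hO (by linarith)
  obtain ⟨C, R, hC, hR, hdecay⟩ := exists_abs_le_rpow_of_isBigO hO
  refine ⟨fun u => if u ≤ R then M * u ^ (-α) else C * u ^ (γ - α), ?_, fun u hu w hw => ?_⟩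
  · rw [← Ioc_union_Ioi_eq_Ioi hR.le]
    refine IntegrableOn.union ?_ ?_
    · refine IntegrableOn.congr_fun ?_ (fun u hu => (if_pos hu.2).symm) measurableSet_Ioc
      exact ((intervalIntegral.intervalIntegrable_rpow' (by linarith)).const_mul M).1
    · refine IntegrableOn.congr_fun ?_ (fun u hu => (if_neg (not_le.mpr hu)).symm)
        measurableSet_Ioi
      exact (integrableOn_Ioi_rpow_of_lt (by linarith) hR).const_mul C
  have hk : 0 ≤ u ^ (-α) := Real.rpow_nonneg (le_of_lt hu) _
  dsimp only
  split_ifs with huR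
  · exact mul_le_mul_of_nonneg_right (hM _ (by simp only [mem_Ici]; linarith)) hk
  · calc |g (u + w)| * u ^ (-α) ≤ C * u ^ γ * u ^ (-α) := by
          refine mul_le_mul_of_nonneg_right ((hdecay _ (by linarith)).trans ?_) hk
          exact mul_le_mul_of_nonneg_left
            (Real.rpow_le_rpow_of_nonpos hu (by linarith) (by linarith)) hC
      _ = C * u ^ (γ - α) := by rw [sub_eq_add_neg, Real.rpow_add hu, mul_assoc]

lemma integrableOn_comp_add_mul_rpow {g : ℝ → ℝ} {α γ w : ℝ} (hα : α < 1) (hγ : γ < α - 1)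
    (hg : ContinuousOn g (Ici 0)) (hO : g =O[atTop] fun x => x ^ γ) (hw : 0 ≤ w) :
    IntegrableOn (fun u => g (u + w) * u ^ (-α)) (Ioi 0) := by
  obtain ⟨b, hb, hbound⟩ := exists_integrable_majorant_comp_add_mul_rpow hα hγ hg hO
  refine hb.mono' ?_ ((ae_restrict_iff' measurableSet_Ioi).mpr (.of_forall fun u hu => ?_))
  · refine ContinuousOn.aestronglyMeasurable (fun u hu => ?_) measurableSet_Ioi
    have hu : 0 < u := hu
    exact ((hg.comp (continuous_add_const w).continuousOn fun v hv => by
      simp only [mem_Ici]; linarith [mem_Ioi.mp hv]) u hu).mul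
      (Real.continuousAt_rpow_const u (-α) (Or.inl hu.ne')).continuousWithinAt
  · rw [Real.norm_eq_abs, abs_mul, abs_of_nonneg (Real.rpow_nonneg (le_of_lt hu) _)]
    exact hbound u hu w hw

lemma integral_Ioi_comp_add_right {E : Type*} [NormedAddCommGroup E] [NormedSpace ℝ E]
    (f : ℝ → E) (w : ℝ) :
    ∫ u in Ioi (0:ℝ), f (u + w) = ∫ x in Ioi w, f x := by
  have hpre : (fun x : ℝ => x + w) ⁻¹' Ioi w = Ioi 0 := by ext u; simp
  rw [← (measurePreserving_add_right volume w).setIntegral_preimage_emb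
    (measurableEmbedding_addRight w) f (Ioi w), hpre]

lemma integrableOn_Ioi_comp_add_right_iff {E : Type*} [NormedAddCommGroup E] {f : ℝ → E} {w : ℝ} :
    IntegrableOn (fun u => f (u + w)) (Ioi 0) ↔ IntegrableOn f (Ioi w) := by
  have hpre : (fun x : ℝ => x + w) ⁻¹' Ioi w = Ioi 0 := by ext u; simp
  simpa only [hpre, Function.comp_def] using
    (measurePreserving_add_right volume w).integrableOn_comp_preimage
      (measurableEmbedding_addRight w) (f := f) (s := Ioi w)

lemma hasDerivAt_integral_Ioi_mul_sub_rpow {F F' : ℝ → ℝ} {α γ δ y : ℝ} (hα : α < 1)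
    (hy : 0 < y) (hF : ∀ x ∈ Ici (0:ℝ), HasDerivAt F (F' x) x) (hF' : ContinuousOn F' (Ici 0))
    (hγ : γ < α - 1) (hOF' : F' =O[atTop] fun x => x ^ γ)
    (hδ : δ < α - 1) (hOF : F =O[atTop] fun x => x ^ δ) :
    HasDerivAt (fun w => ∫ x in Ioi w, F x * (x - w) ^ (-α))
      (∫ x in Ioi y, F' x * (x - y) ^ (-α)) y := by
  have hshift : ∀ (f : ℝ → ℝ) (w : ℝ), ∫ x in Ioi w, f x * (x - w) ^ (-α)
      = ∫ u in Ioi (0:ℝ), f (u + w) * u ^ (-α) := fun f w => by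
    rw [← integral_Ioi_comp_add_right]; simp only [add_sub_cancel_right]
  simp only [hshift]
  have hFc : ContinuousOn F (Ici 0) := fun x hx => (hF x hx).continuousAt.continuousWithinAt
  obtain ⟨b, hb, hbound⟩ := exists_integrable_majorant_comp_add_mul_rpow hα hγ hF' hOF'
  have hpos : ∀ᶠ w in 𝓝 y, 0 < w := lt_mem_nhds hy
  refine (hasDerivAt_integral_of_dominated_loc_of_deriv_le (μ := volume.restrict (Ioi 0))
    (F := fun w u => F (u + w) * u ^ (-α)) (F' := fun w u => F' (u + w) * u ^ (-α))
    (Ioi_mem_nhds hy)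
    (hpos.mono fun w hw => ?_) (integrableOn_comp_add_mul_rpow hα hδ hFc hOF hy.le)
    (integrableOn_comp_add_mul_rpow hα hγ hF' hOF' hy.le).aestronglyMeasurable ?_ hb ?_).2
  · exact (integrableOn_comp_add_mul_rpow hα hδ hFc hOF hw.le).aestronglyMeasurable
  · refine (ae_restrict_iff' measurableSet_Ioi).mpr (.of_forall fun u hu w hw => ?_)
    rw [Real.norm_eq_abs, abs_mul, abs_of_nonneg (Real.rpow_nonneg (le_of_lt hu) _)]
    exact hbound u hu w (le_of_lt hw)
  · refine (ae_restrict_iff' measurableSet_Ioi).mpr (.of_forall fun u hu w hw => ?_)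
    have hu : (0:ℝ) < u := hu
    have hw : (0:ℝ) < w := hw
    exact (((hF (u + w) (by simp only [mem_Ici]; linarith)).comp w
      ((hasDerivAt_id w).const_add u)).mul_const _).congr_deriv (by simp)

lemma intervalIntegrable_sub_rpow {β : ℝ} (hβ : -1 < β) (y : ℝ) :
    IntervalIntegrable (fun x => (y - x) ^ β) volume 0 y := by
  simpa using
    ((intervalIntegral.intervalIntegrable_rpow' (a := 0) (b := y) hβ).comp_sub_left y).symm

lemma integral_mul_sub_rpow_eq {h h' : ℝ → ℝ} {β y : ℝ} (hβ : -1 < β) (hy : 0 ≤ y)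
    (hh : ∀ x ∈ Icc 0 y, HasDerivAt h (h' x) x) (hh' : ContinuousOn h' (Icc 0 y)) :
    ∫ x in (0:ℝ)..y, h x * (y - x) ^ β
      = (h 0 * y ^ (β + 1) + ∫ x in (0:ℝ)..y, h' x * (y - x) ^ (β + 1)) / (β + 1) := by
  have hp : 0 < β + 1 := by linarith
  have hhc : ContinuousOn h (Icc 0 y) := fun x hx => (hh x hx).continuousAt.continuousWithinAt
  have hkc : Continuous fun x : ℝ => (y - x) ^ (β + 1) :=
    (continuous_const.sub continuous_id).rpow_const fun _ => Or.inr hp.le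
  have hderiv : ∀ x ∈ Ioo 0 y, HasDerivAt (fun x => h x * (y - x) ^ (β + 1))
      (h' x * (y - x) ^ (β + 1) - (β + 1) * (h x * (y - x) ^ β)) x := fun x hx => by
    have hk := (Real.hasDerivAt_rpow_const (p := β + 1) (Or.inl (sub_pos.mpr hx.2).ne')).comp x
      ((hasDerivAt_id x).const_sub y)
    refine ((hh x (Ioo_subset_Icc_self hx)).mul hk).congr_deriv ?_
    simp only [Function.comp_apply, add_sub_cancel_right]
    ring
  have hint1 : IntervalIntegrable (fun x => h' x * (y - x) ^ (β + 1)) volume 0 y :=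
    (hh'.mul hkc.continuousOn).intervalIntegrable_of_Icc hy
  have hint2 : IntervalIntegrable (fun x => h x * (y - x) ^ β) volume 0 y :=
    (intervalIntegrable_sub_rpow hβ y).continuousOn_mul (by rwa [uIcc_of_le hy])
  have hFTC := intervalIntegral.integral_eq_sub_of_hasDerivAt_of_le hy
    (f := fun x => h x * (y - x) ^ (β + 1)) (hhc.mul hkc.continuousOn) hderiv
    (hint1.sub (hint2.const_mul _))
  rw [intervalIntegral.integral_sub hint1 (hint2.const_mul _),
    intervalIntegral.integral_const_mul, sub_self, Real.zero_rpow hp.ne', sub_zero] at hFTC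
  field_simp
  linarith

lemma hasDerivAt_max_zero_rpow {p : ℝ} (hp : 1 < p) (t : ℝ) :
    HasDerivAt (fun t : ℝ => max t 0 ^ p) (p * max t 0 ^ (p - 1)) t := by
  have hrpow := fun t : ℝ => Real.hasDerivAt_rpow_const (x := t) (Or.inr hp.le)
  rcases lt_trichotomy t 0 with ht | rfl | ht
  · rw [max_eq_right ht.le, Real.zero_rpow (by linarith), mul_zero]
    refine (hasDerivAt_const t ((0:ℝ) ^ p)).congr_of_eventuallyEq ?_
    filter_upwards [Iio_mem_nhds ht] with s hs using by rw [max_eq_right (le_of_lt hs)]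
  · rw [max_self, Real.zero_rpow (by linarith), mul_zero, ← hasDerivWithinAt_univ,
      ← Iic_union_Ici]
    refine .union ?_ ?_
    · refine (hasDerivWithinAt_const 0 _ ((0:ℝ) ^ p)).congr (fun s hs => ?_) (by simp)
      rw [max_eq_right hs]
    · have h0 := (hrpow 0).hasDerivWithinAt (s := Ici 0)
      rw [Real.zero_rpow (by linarith), mul_zero] at h0
      exact h0.congr (fun s hs => by rw [max_eq_left hs]) (by simp)
  · rw [max_eq_left ht.le]
    refine (hrpow t).congr_of_eventuallyEq ?_
    filter_upwards [Ioi_mem_nhds ht] with s hs using by rw [max_eq_left (le_of_lt hs)]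

lemma setIntegral_Ioc_mul_max_sub_rpow {g : ℝ → ℝ} {p w Y : ℝ} (hp : 0 < p) (hw : 0 ≤ w)
    (hwY : w ≤ Y) :
    ∫ x in Ioc 0 Y, g x * max (w - x) 0 ^ p = ∫ x in (0:ℝ)..w, g x * (w - x) ^ p := by
  rw [intervalIntegral.integral_of_le hw, setIntegral_eq_of_subset_of_forall_sdiff_eq_zero
    measurableSet_Ioc (Ioc_subset_Ioc_right hwY)]
  · refine setIntegral_congr_fun measurableSet_Ioc fun x hx => ?_
    simp only [max_eq_left (sub_nonneg.mpr hx.2)]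
  · rintro x ⟨⟨hx0, -⟩, hx⟩
    have hwx : w - x ≤ 0 := sub_nonpos.mpr (not_lt.mp fun h => hx ⟨hx0, h.le⟩)
    rw [max_eq_right hwx, Real.zero_rpow hp.ne', mul_zero]

lemma hasDerivAt_integral_mul_sub_rpow {g : ℝ → ℝ} {p y : ℝ} (hp : 1 < p) (hy : 0 < y)
    (hg : ContinuousOn g (Ici 0)) :
    HasDerivAt (fun w => ∫ x in (0:ℝ)..w, g x * (w - x) ^ p)
      (p * ∫ x in (0:ℝ)..y, g x * (y - x) ^ (p - 1)) y := by
  -- Near `y` the integral runs over the fixed interval `(0, Y]` against the kernel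
  -- `max (w - x) 0 ^ p`, which is `C¹` in `w` because `p > 1`.
  set Y := y + 1
  have hgY : ContinuousOn g (Icc 0 Y) := hg.mono Icc_subset_Ici_self
  obtain ⟨M, hM⟩ := isCompact_Icc.exists_bound_of_continuousOn hgY
  have hkc : ∀ w q : ℝ, 0 ≤ q → Continuous fun x : ℝ => max (w - x) 0 ^ q := fun w q hq =>
    Continuous.rpow_const (by fun_prop) fun _ => Or.inr hq
  have hint : ∀ k : ℝ → ℝ, Continuous k →
      IntegrableOn (fun x => g x * k x) (Ioc 0 Y) := fun k hk =>
    (hgY.mul hk.continuousOn).integrableOn_Icc.mono_set Ioc_subset_Icc_self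
  have hK := hasDerivAt_integral_of_dominated_loc_of_deriv_le (μ := volume.restrict (Ioc 0 Y))
    (F := fun w x => g x * max (w - x) 0 ^ p)
    (F' := fun w x => g x * (p * max (w - x) 0 ^ (p - 1)))
    (bound := fun _ => M * (p * Y ^ (p - 1))) (Metric.ball_mem_nhds y one_pos)
    (.of_forall fun w => (hint _ (hkc w p (by linarith))).aestronglyMeasurable)
    (hint _ (hkc y p (by linarith)))
    (hint _ (continuous_const.mul (hkc y (p - 1) (by linarith)))).aestronglyMeasurable
    ?_ (integrableOn_const measure_Ioc_lt_top.ne) ?_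
  · have hval : ∫ x in Ioc 0 Y, g x * (p * max (y - x) 0 ^ (p - 1))
        = p * ∫ x in (0:ℝ)..y, g x * (y - x) ^ (p - 1) := by
      simp only [mul_left_comm (g _), integral_const_mul]
      rw [setIntegral_Ioc_mul_max_sub_rpow (by linarith) hy.le (by linarith)]
    rw [← hval]
    refine hK.2.congr_of_eventuallyEq ?_
    filter_upwards [Ioo_mem_nhds hy (show y < Y by linarith)] with w hw
    exact (setIntegral_Ioc_mul_max_sub_rpow (by linarith) hw.1.le hw.2.le).symm
  · refine (ae_restrict_iff' measurableSet_Ioc).mpr (.of_forall fun x hx w hw => ?_)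
    have hwy : |w - y| < 1 := by simpa [Real.dist_eq] using hw
    have hwY : max (w - x) 0 ≤ Y := by
      refine max_le ?_ (by positivity)
      linarith [hx.1, le_abs_self (w - y)]
    have hM0 : 0 ≤ M := (norm_nonneg _).trans (hM 0 ⟨le_rfl, by positivity⟩)
    rw [norm_mul, Real.norm_of_nonneg
      (mul_nonneg (by linarith) (Real.rpow_nonneg (le_max_right _ _) _))]
    gcongr
    exact hM x (Ioc_subset_Icc_self hx)
  · refine (ae_restrict_iff' measurableSet_Ioc).mpr (.of_forall fun x hx w hw => ?_)
    refine (((hasDerivAt_max_zero_rpow hp (w - x)).comp w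
      ((hasDerivAt_id w).sub_const x)).const_mul (g x)).congr_deriv ?_
    simp

lemma hasDerivAt_integral_mul_sub_rpow_of_hasDerivAt {F F' F'' : ℝ → ℝ} {β y : ℝ} (hβ : -1 < β)
    (hy : 0 < y) (hF : ∀ x ∈ Ici (0:ℝ), HasDerivAt F (F' x) x)
    (hF' : ∀ x ∈ Ici (0:ℝ), HasDerivAt F' (F'' x) x) (hF'' : ContinuousOn F'' (Ici 0)) :
    HasDerivAt (fun w => ∫ x in (0:ℝ)..w, F x * (w - x) ^ β)
      (F 0 * y ^ β + ∫ x in (0:ℝ)..y, F' x * (y - x) ^ β) y := by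
  have hF'c : ContinuousOn F' (Ici 0) := fun x hx => (hF' x hx).continuousAt.continuousWithinAt
  have hIcc : ∀ w, Icc (0:ℝ) w ⊆ Ici 0 := fun w => Icc_subset_Ici_self
  have hibp : ∀ w, 0 < w → ∫ x in (0:ℝ)..w, F' x * (w - x) ^ β
      = (F' 0 * w ^ (β + 1) + ∫ x in (0:ℝ)..w, F'' x * (w - x) ^ (β + 1)) / (β + 1) :=
    fun w hw => integral_mul_sub_rpow_eq hβ hw.le (fun x hx => hF' x (hIcc w hx))
      (hF''.mono (hIcc w))
  have hrepr : ∀ w, 0 < w → ∫ x in (0:ℝ)..w, F x * (w - x) ^ β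
      = (F 0 * w ^ (β + 1) + (F' 0 * w ^ (β + 1 + 1)
          + ∫ x in (0:ℝ)..w, F'' x * (w - x) ^ (β + 1 + 1)) / (β + 1 + 1)) / (β + 1) :=
    fun w hw => by
      rw [integral_mul_sub_rpow_eq hβ hw.le (fun x hx => hF x (hIcc w hx)) (hF'c.mono (hIcc w)),
        integral_mul_sub_rpow_eq (by linarith) hw.le (fun x hx => hF' x (hIcc w hx))
          (hF''.mono (hIcc w))]
  have hP := ((((Real.hasDerivAt_rpow_const (p := β + 1) (Or.inl hy.ne')).const_mul (F 0)).add
    ((((Real.hasDerivAt_rpow_const (p := β + 1 + 1) (Or.inl hy.ne')).const_mul (F' 0)).add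
      (hasDerivAt_integral_mul_sub_rpow (p := β + 1 + 1) (by linarith) hy hF'')).div_const
        (β + 1 + 1))).div_const (β + 1))
  refine (hP.congr_of_eventuallyEq ?_).congr_deriv ?_
  · filter_upwards [lt_mem_nhds hy] with w hw using hrepr w hw
  · have hβ1 : β + 1 ≠ 0 := by linarith
    have hβ2 : β + 1 + 1 ≠ 0 := by linarith
    rw [hibp y hy]
    simp only [add_sub_cancel_right]
    field_simp

section SingularKernel

variable {G G' : ℝ → ℝ} {α L : ℝ}

lemma div_rpow_one_add {x : ℝ} (hx : 0 < x) (α : ℝ) : x / x ^ (1 + α) = x ^ (-α) := by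
  rw [Real.rpow_add hx, Real.rpow_one, Real.rpow_neg hx.le]
  field_simp

lemma hasDerivAt_sub_mul_rpow_neg {x g : ℝ} (hG : HasDerivAt G g x) (hx : 0 < x) :
    HasDerivAt (fun t => (G t - G 0) * t ^ (-α))
      (g * x ^ (-α) - α * ((G x - G 0) / x ^ (1 + α))) x := by
  refine ((hG.sub_const (G 0)).mul
    (Real.hasDerivAt_rpow_const (p := -α) (Or.inl hx.ne'))).congr_deriv ?_
  rw [show -α - 1 = -(1 + α) by ring, Real.rpow_neg hx.le (1 + α)]
  ring

lemma tendsto_sub_mul_rpow_neg_nhdsGT_zero (hα : α < 1)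
    (hL : ∀ᶠ x in 𝓝[>] 0, |G x - G 0| ≤ L * x) :
    Tendsto (fun t => (G t - G 0) * t ^ (-α)) (𝓝[>] 0) (𝓝 0) := by
  have hlim : Tendsto (fun t : ℝ => L * t ^ (1 - α)) (𝓝[>] 0) (𝓝 0) := by
    have := ((Real.continuousAt_rpow_const 0 (1 - α) (Or.inr (by linarith))).const_mul
      L).tendsto.mono_left (nhdsWithin_le_nhds (s := Ioi 0))
    simpa [Real.zero_rpow (by linarith : 1 - α ≠ 0)] using this
  refine squeeze_zero_norm' ?_ hlim
  filter_upwards [hL, self_mem_nhdsWithin] with t ht ht0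
  have ht0 : 0 < t := ht0
  rw [Real.norm_eq_abs, abs_mul, abs_of_nonneg (Real.rpow_nonneg ht0.le _)]
  calc |G t - G 0| * t ^ (-α) ≤ L * t * t ^ (-α) :=
        mul_le_mul_of_nonneg_right ht (Real.rpow_nonneg ht0.le _)
    _ = L * t ^ (1 - α) := by rw [sub_eq_add_neg, Real.rpow_add ht0, Real.rpow_one, mul_assoc]

lemma continuousOn_sub_div_rpow {s : Set ℝ} (hs : s ⊆ Ioi 0) (hG : ContinuousOn G s) :
    ContinuousOn (fun x => (G x - G 0) / x ^ (1 + α)) s :=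
  (hG.sub continuousOn_const).div
    (continuousOn_id.rpow_const fun _ hx => Or.inl (ne_of_gt (hs hx)))
    fun _ hx => (Real.rpow_pos_of_pos (hs hx) _).ne'

lemma integrableOn_Ioc_sub_div_rpow {b : ℝ} (hα : α < 1) (hG : ContinuousOn G (Ioc 0 b))
    (hL : ∀ x ∈ Ioc 0 b, |G x - G 0| ≤ L * x) :
    IntegrableOn (fun x => (G x - G 0) / x ^ (1 + α)) (Ioc 0 b) := by
  refine (((intervalIntegral.intervalIntegrable_rpow' (by linarith : -1 < -α)).const_mul
    L).1).mono' ((continuousOn_sub_div_rpow Ioc_subset_Ioi_self hG).aestronglyMeasurable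
      measurableSet_Ioc) ((ae_restrict_iff' measurableSet_Ioc).mpr (.of_forall fun x hx => ?_))
  rw [Real.norm_eq_abs, abs_div, abs_of_pos (Real.rpow_pos_of_pos hx.1 _),
    ← div_rpow_one_add hx.1, mul_div_assoc']
  exact div_le_div_of_nonneg_right (hL x hx) (Real.rpow_nonneg hx.1.le _)

lemma integrableOn_Ioi_sub_div_rpow {M : ℝ} (hα0 : 0 < α) (hα1 : α < 1)
    (hG : ContinuousOn G (Ioi 0)) (hL : ∀ x ∈ Ioi 0, |G x - G 0| ≤ L * x)
    (hM : ∀ x ∈ Ioi 0, |G x - G 0| ≤ M) :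
    IntegrableOn (fun x => (G x - G 0) / x ^ (1 + α)) (Ioi 0) := by
  rw [← Ioc_union_Ioi_eq_Ioi zero_le_one]
  have hx0 : Ioi (1:ℝ) ⊆ Ioi 0 := Ioi_subset_Ioi zero_le_one
  refine (integrableOn_Ioc_sub_div_rpow hα1 (hG.mono Ioc_subset_Ioi_self)
    fun x hx => hL x hx.1).union ?_
  refine ((integrableOn_Ioi_rpow_of_lt (by linarith : -(1 + α) < -1) one_pos).const_mul M).mono'
    ((continuousOn_sub_div_rpow hx0 (hG.mono hx0)).aestronglyMeasurable measurableSet_Ioi)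
    ((ae_restrict_iff' measurableSet_Ioi).mpr (.of_forall fun x hx => ?_))
  have hx : 0 < x := hx0 hx
  rw [Real.norm_eq_abs, abs_div, abs_of_pos (Real.rpow_pos_of_pos hx _), Real.rpow_neg hx.le,
    ← div_eq_mul_inv]
  exact div_le_div_of_nonneg_right (hM x hx) (Real.rpow_nonneg hx.le _)

lemma integral_sub_div_rpow_eq {b : ℝ} (hα0 : 0 < α) (hα1 : α < 1) (hb : 0 < b)
    (hG : ∀ x ∈ Ioc 0 b, HasDerivAt G (G' x) x) (hL : ∀ x ∈ Ioc 0 b, |G x - G 0| ≤ L * x)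
    (hG' : IntervalIntegrable (fun x => G' x * x ^ (-α)) volume 0 b) :
    ∫ x in (0:ℝ)..b, (G x - G 0) / x ^ (1 + α)
      = ((∫ x in (0:ℝ)..b, G' x * x ^ (-α)) - (G b - G 0) * b ^ (-α)) / α := by
  have hGc : ContinuousOn G (Ioc 0 b) := fun x hx => (hG x hx).continuousAt.continuousWithinAt
  have hint : IntervalIntegrable (fun x => (G x - G 0) / x ^ (1 + α)) volume 0 b :=
    (intervalIntegrable_iff_integrableOn_Ioc_of_le hb.le).mpr
      (integrableOn_Ioc_sub_div_rpow hα1 hGc hL)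
  have hw0 : ContinuousWithinAt (fun t => (G t - G 0) * t ^ (-α)) (Ici 0) 0 := by
    refine continuousWithinAt_Ioi_iff_Ici.mp ?_
    simpa [ContinuousWithinAt] using tendsto_sub_mul_rpow_neg_nhdsGT_zero hα1
      (mem_of_superset (Ioc_mem_nhdsGT hb) hL)
  have hwc : ContinuousOn (fun t => (G t - G 0) * t ^ (-α)) (Icc 0 b) := by
    intro x hx
    rcases hx.1.eq_or_lt with rfl | hx0
    · exact hw0.mono Icc_subset_Ici_self
    · exact (hasDerivAt_sub_mul_rpow_neg (hG x ⟨hx0, hx.2⟩) hx0).continuousAt.continuousWithinAt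
  have hFTC := intervalIntegral.integral_eq_sub_of_hasDerivAt_of_le hb.le hwc
    (fun x hx => hasDerivAt_sub_mul_rpow_neg (hG x (Ioo_subset_Ioc_self hx)) hx.1)
    (hG'.sub (hint.const_mul α))
  rw [intervalIntegral.integral_sub hG' (hint.const_mul α), intervalIntegral.integral_const_mul]
    at hFTC
  simp only [sub_self, zero_mul, sub_zero] at hFTC
  field_simp
  linarith

lemma integral_Ioi_sub_div_rpow_eq {M : ℝ} (hα0 : 0 < α) (hα1 : α < 1)
    (hG : ∀ x ∈ Ioi 0, HasDerivAt G (G' x) x) (hL : ∀ x ∈ Ioi 0, |G x - G 0| ≤ L * x)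
    (hM : ∀ x ∈ Ioi 0, |G x - G 0| ≤ M) (hG' : IntegrableOn (fun x => G' x * x ^ (-α)) (Ioi 0)) :
    ∫ x in Ioi 0, (G x - G 0) / x ^ (1 + α) = (∫ x in Ioi 0, G' x * x ^ (-α)) / α := by
  have hGc : ContinuousOn G (Ioi 0) := fun x hx => (hG x hx).continuousAt.continuousWithinAt
  have hint := integrableOn_Ioi_sub_div_rpow hα0 hα1 hGc hL hM
  have hw0 : ContinuousWithinAt (fun t => (G t - G 0) * t ^ (-α)) (Ici 0) 0 := by
    refine continuousWithinAt_Ioi_iff_Ici.mp ?_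
    simpa [ContinuousWithinAt] using tendsto_sub_mul_rpow_neg_nhdsGT_zero hα1
      (mem_of_superset self_mem_nhdsWithin hL)
  have hlim : Tendsto (fun t => (G t - G 0) * t ^ (-α)) atTop (𝓝 0) := by
    refine squeeze_zero_norm' ?_ (by simpa using (tendsto_rpow_neg_atTop hα0).const_mul M)
    filter_upwards [eventually_gt_atTop 0] with t ht
    rw [Real.norm_eq_abs, abs_mul, abs_of_nonneg (Real.rpow_nonneg ht.le _)]
    exact mul_le_mul_of_nonneg_right (hM t ht) (Real.rpow_nonneg ht.le _)
  have hFTC := integral_Ioi_of_hasDerivAt_of_tendsto hw0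
    (fun x hx => hasDerivAt_sub_mul_rpow_neg (hG x hx) hx) (hG'.sub (hint.const_mul α)) hlim
  rw [integral_sub hG' (hint.const_mul α), integral_const_mul] at hFTC
  simp only [sub_self, zero_mul] at hFTC
  field_simp
  linarith

end SingularKernel

section ItoIntegrals

variable {F F' : ℝ → ℝ} {α y L : ℝ}

lemma abs_sub_le_of_abs_deriv_le (hF : ∀ x ∈ Ici (0:ℝ), HasDerivAt F (F' x) x)
    (hL : ∀ x ∈ Ici (0:ℝ), |F' x| ≤ L) {a b : ℝ} (ha : 0 ≤ a) (hb : 0 ≤ b) :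
    |F b - F a| ≤ L * |b - a| := by
  simpa only [Real.norm_eq_abs] using Convex.norm_image_sub_le_of_norm_hasDerivWithin_le
    (fun x hx => (hF x hx).hasDerivWithinAt) (fun x hx => (Real.norm_eq_abs _).trans_le (hL x hx))
    (convex_Ici 0) ha hb

lemma intervalIntegrable_and_integral_comp_sub_sub_div_rpow (hα0 : 0 < α) (hα1 : α < 1)
    (hy : 0 < y) (hF : ∀ x ∈ Ici (0:ℝ), HasDerivAt F (F' x) x) (hF' : ContinuousOn F' (Ici 0))
    (hL : ∀ x ∈ Ici (0:ℝ), |F' x| ≤ L) :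
    IntervalIntegrable (fun x => (F (y - x) - F y) / x ^ (1 + α)) volume 0 y ∧
      ∫ x in (0:ℝ)..y, (F (y - x) - F y) / x ^ (1 + α)
        = ((F y - F 0) * y ^ (-α) - ∫ x in (0:ℝ)..y, F' x * (y - x) ^ (-α)) / α := by
  have hmem : ∀ x ∈ Ioc 0 y, y - x ∈ Ici (0:ℝ) := fun x hx => sub_nonneg.mpr hx.2
  have hG : ∀ x ∈ Ioc 0 y, HasDerivAt (fun t => F (y - t)) (-F' (y - x)) x := fun x hx =>
    ((hF _ (hmem x hx)).comp x ((hasDerivAt_id x).const_sub y)).congr_deriv (by simp)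
  have hlip : ∀ x ∈ Ioc 0 y, |F (y - x) - F (y - 0)| ≤ L * x := fun x hx => by
    simpa [abs_of_pos hx.1] using abs_sub_le_of_abs_deriv_le hF hL hy.le (hmem x hx)
  have hG' : IntervalIntegrable (fun x => -F' (y - x) * x ^ (-α)) volume 0 y := by
    refine (intervalIntegral.intervalIntegrable_rpow' (by linarith)).continuousOn_mul ?_
    rw [uIcc_of_le hy.le]
    exact (hF'.comp (continuous_sub_left y).continuousOn fun x hx => sub_nonneg.mpr hx.2).neg
  have hint := integrableOn_Ioc_sub_div_rpow hα1
    (fun x hx => (hG x hx).continuousAt.continuousWithinAt) hlip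
  have heq := integral_sub_div_rpow_eq hα0 hα1 hy hG hlip hG'
  have hsubst : ∫ x in (0:ℝ)..y, -F' (y - x) * x ^ (-α)
      = -∫ x in (0:ℝ)..y, F' x * (y - x) ^ (-α) := by
    simpa [neg_mul] using
      intervalIntegral.integral_comp_sub_left (a := 0) (b := y) (fun x => F' x * (y - x) ^ (-α)) y
  simp only [sub_zero, sub_self, hsubst] at hint heq
  refine ⟨(intervalIntegrable_iff_integrableOn_Ioc_of_le hy.le).mpr hint, heq.trans ?_⟩
  ring

lemma integrableOn_and_integral_Ioi_comp_add_sub_div_rpow {M γ : ℝ} (hα0 : 0 < α) (hα1 : α < 1)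
    (hy : 0 ≤ y) (hF : ∀ x ∈ Ici (0:ℝ), HasDerivAt F (F' x) x) (hF' : ContinuousOn F' (Ici 0))
    (hL : ∀ x ∈ Ici (0:ℝ), |F' x| ≤ L) (hM : ∀ x ∈ Ici (0:ℝ), |F x| ≤ M)
    (hγ : γ < α - 1) (hOF' : F' =O[atTop] fun x => x ^ γ) :
    IntegrableOn (fun x => (F (y + x) - F y) / x ^ (1 + α)) (Ioi 0) ∧
      ∫ x in Ioi 0, (F (y + x) - F y) / x ^ (1 + α)
        = (∫ x in Ioi y, F' x * (x - y) ^ (-α)) / α := by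
  have hmem : ∀ x ∈ Ioi (0:ℝ), y + x ∈ Ici (0:ℝ) := fun x hx => add_nonneg hy (le_of_lt hx)
  have hG : ∀ x ∈ Ioi 0, HasDerivAt (fun t => F (y + t)) (F' (y + x)) x := fun x hx =>
    ((hF _ (hmem x hx)).comp x ((hasDerivAt_id x).const_add y)).congr_deriv (by simp)
  have hlip : ∀ x ∈ Ioi 0, |F (y + x) - F (y + 0)| ≤ L * x := fun x hx => by
    simpa [abs_of_pos (mem_Ioi.mp hx)] using abs_sub_le_of_abs_deriv_le hF hL hy (hmem x hx)
  have hbdd : ∀ x ∈ Ioi 0, |F (y + x) - F (y + 0)| ≤ 2 * M := fun x hx => by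
    rw [add_zero]
    linarith [abs_sub (F (y + x)) (F y), hM _ (hmem x hx), hM y hy]
  have hG' : IntegrableOn (fun x => F' (y + x) * x ^ (-α)) (Ioi 0) := by
    simpa only [add_comm] using integrableOn_comp_add_mul_rpow hα1 hγ hF' hOF' hy
  have hshift : ∫ x in Ioi 0, F' (y + x) * x ^ (-α) = ∫ x in Ioi y, F' x * (x - y) ^ (-α) := by
    rw [← integral_Ioi_comp_add_right (fun x => F' x * (x - y) ^ (-α)) y]
    simp only [add_sub_cancel_right, add_comm y]
  have hint := integrableOn_Ioi_sub_div_rpow hα0 hα1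
    (fun x hx => (hG x hx).continuousAt.continuousWithinAt) hlip hbdd
  have heq := integral_Ioi_sub_div_rpow_eq hα0 hα1 hG hlip hbdd hG'
  simp only [add_zero] at hint heq
  exact ⟨hint, heq.trans (by rw [hshift])⟩

end ItoIntegrals

end StableGenerator

open StableGenerator

theorem generator_three_forms_general_stable_index_lt_one_general
    {α cp cm : ℝ} (hα : α ∈ Set.Ioo (0:ℝ) 1) {F : ℝ → ℝ}
    -- `F` is twice continuously differentiable on `[0,∞)`
    (hd1 : ∀ x ∈ Set.Ici (0:ℝ), DifferentiableAt ℝ F x)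
    (hc1 : ContinuousOn (deriv F) (Set.Ici 0))
    (hd2 : ∀ x ∈ Set.Ici (0:ℝ), DifferentiableAt ℝ (deriv F) x)
    (hc2 : ContinuousOn (deriv (deriv F)) (Set.Ici 0))
    -- growth conditions at infinity
    (hO1 : ∃ γ < α - 1, (deriv F) =O[atTop] (fun x => x ^ γ))
    (hO0 : ∃ δ < α - 1, F =O[atTop] (fun x => x ^ δ)) :
    ∀ y : ℝ, 0 < y →
      let gp : ℝ → ℝ := fun w => ∫ x in (0:ℝ)..w, F x * (w - x) ^ (-α)
      let gm : ℝ → ℝ := fun w => ∫ x in Set.Ioi w, F x * (x - w) ^ (-α)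
      -- all expressions are well defined
      IntervalIntegrable (fun x => (F (y - x) - F y) * (cp / x ^ (1 + α))) volume 0 y ∧
      IntegrableOn (fun x => (F (y + x) - F y) * (cm / x ^ (1 + α))) (Set.Ioi 0) ∧
      DifferentiableAt ℝ gp y ∧
      DifferentiableAt ℝ gm y ∧
      IntervalIntegrable (fun x => deriv F x * (y - x) ^ (-α)) volume 0 y ∧
      IntegrableOn (fun x => deriv F x * (x - y) ^ (-α)) (Set.Ioi y) ∧
      -- Itô form = Riemann–Liouville form
      ((∫ x in (0:ℝ)..y, (F (y - x) - F y) * (cp / x ^ (1 + α)))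
          + cp * (F 0 - F y) / (α * y ^ α)
          + (∫ x in Set.Ioi (0:ℝ), (F (y + x) - F y) * (cm / x ^ (1 + α)))
        = -(cp / α) * deriv gp y + cp * F 0 / (α * y ^ α) + (cm / α) * deriv gm y) ∧
      -- Riemann–Liouville form = Caputo form
      (-(cp / α) * deriv gp y + cp * F 0 / (α * y ^ α) + (cm / α) * deriv gm y
        = -(cp / α) * (∫ x in (0:ℝ)..y, deriv F x * (y - x) ^ (-α))
          + (cm / α) * ∫ x in Set.Ioi y, deriv F x * (x - y) ^ (-α)) := by
  obtain ⟨hα0, hα1⟩ := hα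
  obtain ⟨γ, hγ, hOF'⟩ := hO1
  obtain ⟨δ, hδ, hOF⟩ := hO0
  have hF : ∀ x ∈ Ici (0:ℝ), HasDerivAt F (deriv F x) x := fun x hx => (hd1 x hx).hasDerivAt
  have hFc : ContinuousOn F (Ici 0) := fun x hx => (hF x hx).continuousAt.continuousWithinAt
  obtain ⟨L, hL⟩ := exists_abs_le_of_continuousOn_of_isBigO hc1 hOF' (by linarith)
  obtain ⟨M, hM⟩ := exists_abs_le_of_continuousOn_of_isBigO hFc hOF (by linarith)
  intro y hy gp gm
  have hgp : HasDerivAt gp (F 0 * y ^ (-α) + ∫ x in (0:ℝ)..y, deriv F x * (y - x) ^ (-α)) y :=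
    hasDerivAt_integral_mul_sub_rpow_of_hasDerivAt (by linarith) hy hF
      (fun x hx => (hd2 x hx).hasDerivAt) hc2
  have hgm : HasDerivAt gm (∫ x in Ioi y, deriv F x * (x - y) ^ (-α)) y :=
    hasDerivAt_integral_Ioi_mul_sub_rpow hα1 hy hF hc1 hγ hOF' hδ hOF
  obtain ⟨hIl, hEl⟩ := intervalIntegrable_and_integral_comp_sub_sub_div_rpow hα0 hα1 hy hF hc1 hL
  obtain ⟨hIr, hEr⟩ :=
    integrableOn_and_integral_Ioi_comp_add_sub_div_rpow hα0 hα1 hy.le hF hc1 hL hM hγ hOF'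
  have hcp : ∀ x, (F (y - x) - F y) * (cp / x ^ (1 + α)) = cp * ((F (y - x) - F y) / x ^ (1 + α)) :=
    fun x => by ring
  have hcm : ∀ x, (F (y + x) - F y) * (cm / x ^ (1 + α)) = cm * ((F (y + x) - F y) / x ^ (1 + α)) :=
    fun x => by ring
  have hyα : y ^ (-α) = (y ^ α)⁻¹ := Real.rpow_neg hy.le α
  refine ⟨by simpa only [hcp] using hIl.const_mul cp, by simp only [hcm]; exact hIr.const_mul cm,
    hgp.differentiableAt, hgm.differentiableAt,
    (intervalIntegrable_sub_rpow (by linarith) y).continuousOn_mul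
      (hc1.mono (by simp [uIcc_of_le hy.le, Icc_subset_Ici_self])),
    integrableOn_Ioi_comp_add_right_iff.mp
      (by simpa using integrableOn_comp_add_mul_rpow hα1 hγ hc1 hOF' hy.le), ?_, ?_⟩
  · rw [hgp.deriv, hgm.deriv]
    simp only [hcp, hcm, intervalIntegral.integral_const_mul, integral_const_mul, hEl, hEr, hyα]
    field_simp
    ring
  · rw [hgp.deriv, hgm.deriv, hyα]
    field_simp
    ring

theorem generator_three_forms_general_stable_index_lt_one
    {α cp cm : ℝ} (hα : α ∈ Set.Ioo (0:ℝ) 1) (hcp : 0 ≤ cp) (hcm : 0 ≤ cm) {F : ℝ → ℝ}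
    -- `F` is twice continuously differentiable on `[0,∞)`
    (hd1 : ∀ x ∈ Set.Ici (0:ℝ), DifferentiableAt ℝ F x)
    (hc1 : ContinuousOn (deriv F) (Set.Ici 0))
    (hd2 : ∀ x ∈ Set.Ici (0:ℝ), DifferentiableAt ℝ (deriv F) x)
    (hc2 : ContinuousOn (deriv (deriv F)) (Set.Ici 0))
    -- `F'` and `F''` are bounded
    (hb1 : ∃ M, ∀ x ∈ Set.Ici (0:ℝ), |deriv F x| ≤ M)
    (hb2 : ∃ M, ∀ x ∈ Set.Ici (0:ℝ), |deriv (deriv F) x| ≤ M)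
    -- growth conditions at infinity
    (hO1 : ∃ γ < α - 1, (deriv F) =O[atTop] (fun x => x ^ γ))
    (hO0 : ∃ δ < α - 1, F =O[atTop] (fun x => x ^ δ)) :
    ∀ y : ℝ, 0 < y →
      let gp : ℝ → ℝ := fun w => ∫ x in (0:ℝ)..w, F x * (w - x) ^ (-α)
      let gm : ℝ → ℝ := fun w => ∫ x in Set.Ioi w, F x * (x - w) ^ (-α)
      -- all expressions are well defined
      IntervalIntegrable (fun x => (F (y - x) - F y) * (cp / x ^ (1 + α))) volume 0 y ∧
      IntegrableOn (fun x => (F (y + x) - F y) * (cm / x ^ (1 + α))) (Set.Ioi 0) ∧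
      DifferentiableAt ℝ gp y ∧
      DifferentiableAt ℝ gm y ∧
      IntervalIntegrable (fun x => deriv F x * (y - x) ^ (-α)) volume 0 y ∧
      IntegrableOn (fun x => deriv F x * (x - y) ^ (-α)) (Set.Ioi y) ∧
      -- Itô form = Riemann–Liouville form
      ((∫ x in (0:ℝ)..y, (F (y - x) - F y) * (cp / x ^ (1 + α)))
          + cp * (F 0 - F y) / (α * y ^ α)
          + (∫ x in Set.Ioi (0:ℝ), (F (y + x) - F y) * (cm / x ^ (1 + α)))
        = -(cp / α) * deriv gp y + cp * F 0 / (α * y ^ α) + (cm / α) * deriv gm y) ∧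
      -- Riemann–Liouville form = Caputo form
      (-(cp / α) * deriv gp y + cp * F 0 / (α * y ^ α) + (cm / α) * deriv gm y
        = -(cp / α) * (∫ x in (0:ℝ)..y, deriv F x * (y - x) ^ (-α))
          + (cm / α) * ∫ x in Set.Ioi y, deriv F x * (x - y) ^ (-α)) :=
  generator_three_forms_general_stable_index_lt_one_general hα hd1 hc1 hd2 hc2 hO1 hO0
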